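/- Let V₀ be a finite set with n = |V₀| ≥ 2, let cap and dem be symmetric nonnegative functions on unordered pairs of distinct points of V₀, let γ ≥ 1, and suppose there are unit vectors {ū_u : u ∈ V₀} in a real inner product space such that the set {ū_u, −ū_u : u ∈ V₀} satisfies the ℓ2²-triangle inequalities and: (i) for every A ⊆ V₀ with ∅ ≠ A ≠ V₀, cap(E_c(A,Ā)) > γ·dem(E_d(A,Ā)); and (ii) Σ over pairs of cap(u,v)·‖ū_u − ū_v‖² < Σ over pairs of dem(u,v)·‖ū_u − ū_v‖². Let G on V = V₀×{1,2} be the graph from the reduction from Sparsest Cut to Max Cut with W∞ > γ·Σ over pairs of (2·cap(u,v) + 2·dem(u,v)), and S = V₀×{1}. Then G is a γ-stable instance of Max Cut with maximum cut (S,S̄), and the assignment x_{u₁} = ū_u, x_{u₂} = −ū_u is a feasible solution of the Goemans–Williamson SDP relaxation with triangle inequalities whose objective value is strictly greater than w(E(S,S̄)); consequently the SDP relaxation for G is not integral. -/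

import Mathlib

/-
Describe a cut `T` of `V₀ × {1,2}` by its traces `A`, `B` on the two copies. Compared
with `S = V₀ × {1}`, the cut `T` gains the demand edges cut by `A` and by `B`, and loses
the cross edges `{u₁, v₂}` it leaves uncut. If `T` separates every pair `u₁, u₂`, then
`B = Aᶜ` and the two amounts are twice `dem(E_d(A,Ā))` and twice `cap(E_c(A,Ā))`, so
stability is the sparsity hypothesis (i). Otherwise `T` loses an edge of weight `W∞`, which
outweighs `γ` times the total demand. On the SDP side, `‖ū_u + ū_v‖² = 4 - ‖ū_u - ū_v‖²`
for unit vectors shows that the value of `x` exceeds `w(E(S,S̄))` by half the gap in (ii).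
-/

open Finset

/-- The pair `{u, v}` is separated by the cut `(S, V∖S)`. -/
abbrev cutSep {V : Type*} (S : Finset V) (u v : V) : Prop :=
  (u ∈ S ∧ v ∉ S) ∨ (v ∈ S ∧ u ∉ S)

/-- Total weight of the set of unordered pairs `{u,v}` satisfying the symmetric
predicate `P`; the sum over ordered pairs counts each unordered pair twice, whence
the division by `2`. -/
noncomputable def cutWeight {V : Type*} [Fintype V] (w : V → V → ℝ)
    (P : V → V → Prop) : ℝ :=
  have := Classical.propDecidable
  (∑ u, ∑ v, if P u v then w u v else 0) / 2

/-- `G = (V, w)` is a `γ`-stable instance of Max Cut with maximum cut `(S, V∖S)`: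
for every cut `(T, V∖T)` different from `(S, V∖S)`,
`w(E(S,S̄)∖E(T,T̄)) > γ·w(E(T,T̄)∖E(S,S̄))`. -/
def IsMaxCutStable {V : Type*} [Fintype V] [DecidableEq V]
    (w : V → V → ℝ) (γ : ℝ) (S : Finset V) : Prop :=
  ∀ T : Finset V, T ≠ S → T ≠ Sᶜ →
    γ * cutWeight w (fun u v => cutSep T u v ∧ ¬ cutSep S u v) <
      cutWeight w (fun u v => cutSep S u v ∧ ¬ cutSep T u v)

/-- The reduction from Sparsest Cut to Max Cut: the graph on `V₀ × {1,2}` (here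
`V₀ × Bool`, side "1" being `false`) with `w(u₁,v₂) = w(u₂,v₁) = cap(u,v)`,
`w(u₁,v₁) = w(u₂,v₂) = dem(u,v)` for `u ≠ v`, and `w(u₁,u₂) = W∞`. -/
noncomputable def reductionWeight {V₀ : Type*} [DecidableEq V₀]
    (cap dem : V₀ → V₀ → ℝ) (Winf : ℝ) :
    V₀ × Bool → V₀ × Bool → ℝ :=
  fun p q =>
    if p.1 = q.1 then (if p.2 = q.2 then 0 else Winf)
    else (if p.2 = q.2 then dem p.1 q.1 else cap p.1 q.1)

section CutWeight

variable {V : Type*} [Fintype V]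

lemma cutWeight_eq (w : V → V → ℝ) (P : V → V → Prop) [DecidableRel P] :
    cutWeight w P = (∑ u, ∑ v, if P u v then w u v else 0) / 2 := by
  unfold cutWeight
  congr! 4

lemma cutWeight_congr {w w' : V → V → ℝ} {P Q : V → V → Prop}
    (hPQ : ∀ u v, P u v ↔ Q u v) (hw : ∀ u v, Q u v → w u v = w' u v) :
    cutWeight w P = cutWeight w' Q := by
  classical
  rw [cutWeight_eq, cutWeight_eq]
  congr 1
  refine Finset.sum_congr rfl fun u _ => Finset.sum_congr rfl fun v _ => ?_
  by_cases h : P u v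
  · rw [if_pos h, if_pos ((hPQ u v).1 h), hw u v ((hPQ u v).1 h)]
  · rw [if_neg h, if_neg (mt (hPQ u v).2 h)]

lemma cutWeight_false (w : V → V → ℝ) : cutWeight w (fun _ _ => False) = 0 := by
  classical
  simp [cutWeight_eq]

lemma cutWeight_mono {w : V → V → ℝ} (hw : ∀ u v, 0 ≤ w u v) {P Q : V → V → Prop}
    (hPQ : ∀ u v, P u v → Q u v) : cutWeight w P ≤ cutWeight w Q := by
  classical
  rw [cutWeight_eq, cutWeight_eq]
  gcongr with u _ v _
  split_ifs with hP hQ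
  exacts [le_rfl, absurd (hPQ u v hP) hQ, hw u v, le_rfl]

lemma cutWeight_nonneg {w : V → V → ℝ} (hw : ∀ u v, 0 ≤ w u v) (P : V → V → Prop) :
    0 ≤ cutWeight w P :=
  cutWeight_false w ▸ cutWeight_mono hw fun _ _ => False.elim

lemma half_le_cutWeight {w : V → V → ℝ} (hw : ∀ u v, 0 ≤ w u v) {P : V → V → Prop}
    {u v : V} (h : P u v) : w u v / 2 ≤ cutWeight w P := by
  classical
  rw [cutWeight_eq]
  gcongr
  have hnn : ∀ a b, 0 ≤ if P a b then w a b else 0 := fun a b => by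
    split_ifs
    exacts [hw a b, le_rfl]
  calc w u v = if P u v then w u v else 0 := (if_pos h).symm
    _ ≤ ∑ b, if P u b then w u b else 0 :=
      Finset.single_le_sum (fun b _ => hnn u b) (Finset.mem_univ v)
    _ ≤ ∑ a, ∑ b, if P a b then w a b else 0 :=
      Finset.single_le_sum (f := fun a => ∑ b, if P a b then w a b else 0)
        (fun a _ => Finset.sum_nonneg fun b _ => hnn a b) (Finset.mem_univ u)

lemma cutWeight_split (w : V → V → ℝ) (P Q : V → V → Prop) :
    cutWeight w P =
      cutWeight w (fun u v => P u v ∧ Q u v) + cutWeight w (fun u v => P u v ∧ ¬ Q u v) := by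
  classical
  simp only [cutWeight_eq, ← add_div, ← Finset.sum_add_distrib]
  congr 1
  refine Finset.sum_congr rfl fun u _ => Finset.sum_congr rfl fun v _ => ?_
  by_cases hP : P u v <;> by_cases hQ : Q u v <;> simp [hP, hQ]

lemma cutSep_compl [DecidableEq V] (S : Finset V) (u v : V) :
    cutSep Sᶜ u v ↔ cutSep S u v := by
  simp only [cutSep, Finset.mem_compl, not_not]
  tauto

lemma IsMaxCutStable.cutWeight_le [DecidableEq V] {w : V → V → ℝ} {γ : ℝ} {S : Finset V}
    (h : IsMaxCutStable w γ S) (hw : ∀ u v, 0 ≤ w u v) (hγ : 1 ≤ γ) (T : Finset V) :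
    cutWeight w (cutSep T) ≤ cutWeight w (cutSep S) := by
  by_cases hTS : T = S
  · rw [hTS]
  by_cases hTSc : T = Sᶜ
  · subst hTSc
    exact (cutWeight_congr (cutSep_compl S) fun _ _ _ => rfl).le
  have hlt := h T hTS hTSc
  have hnn := cutWeight_nonneg hw fun u v => cutSep T u v ∧ ¬ cutSep S u v
  rw [cutWeight_split w (cutSep T) (cutSep S), cutWeight_split w (cutSep S) (cutSep T),
    cutWeight_congr (fun u v => and_comm) fun _ _ _ => rfl]
  nlinarith

end CutWeight

lemma cutSep_ne {α : Type*} {T : Finset α} {u v : α} (h : cutSep T u v) : u ≠ v := by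
  rintro rfl
  simp [cutSep] at h

lemma cutSep_comm {α : Type*} (T : Finset α) (u v : α) : cutSep T u v ↔ cutSep T v u :=
  Or.comm

lemma Fintype.sum_sum_prod_bool {α M : Type*} [Fintype α] [AddCommMonoid M]
    (f : α × Bool → α × Bool → M) :
    ∑ p, ∑ q, f p q = ∑ u, ∑ v, (f (u, false) (v, false) + f (u, false) (v, true)
      + f (u, true) (v, false) + f (u, true) (v, true)) := by
  simp only [Fintype.sum_prod_type, Fintype.sum_bool, Finset.sum_add_distrib]
  abel

lemma cutWeight_prod_bool {α : Type*} [Fintype α] (w : α × Bool → α × Bool → ℝ)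
    (P : α × Bool → α × Bool → Prop) :
    cutWeight w P =
      cutWeight (fun u v => w (u, false) (v, false)) (fun u v => P (u, false) (v, false))
      + cutWeight (fun u v => w (u, false) (v, true)) (fun u v => P (u, false) (v, true))
      + cutWeight (fun u v => w (u, true) (v, false)) (fun u v => P (u, true) (v, false))
      + cutWeight (fun u v => w (u, true) (v, true)) (fun u v => P (u, true) (v, true)) := by
  classical
  simp only [cutWeight_eq, Fintype.sum_sum_prod_bool, ← add_div, ← Finset.sum_add_distrib]

def firstCopy (α : Type*) [Fintype α] : Finset (α × Bool) := univ.filter fun p => p.2 = false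

lemma cutSep_firstCopy {α : Type*} [Fintype α] (p q : α × Bool) :
    cutSep (firstCopy α) p q ↔ p.2 ≠ q.2 := by
  obtain ⟨u, _ | _⟩ := p <;> obtain ⟨v, _ | _⟩ := q <;> simp [cutSep, firstCopy]

section Reduction

variable {V₀ : Type*} [DecidableEq V₀] (cap dem : V₀ → V₀ → ℝ) (Winf : ℝ)

@[simp] lemma reductionWeight_same_side (u v : V₀) (b : Bool) :
    reductionWeight cap dem Winf (u, b) (v, b) = if u = v then 0 else dem u v := by
  simp [reductionWeight]

@[simp] lemma reductionWeight_true_false (u v : V₀) :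
    reductionWeight cap dem Winf (u, true) (v, false) =
      reductionWeight cap dem Winf (u, false) (v, true) := by
  simp [reductionWeight]

lemma reductionWeight_nonneg {cap dem : V₀ → V₀ → ℝ} {Winf : ℝ} (hcap : ∀ u v, 0 ≤ cap u v)
    (hdem : ∀ u v, 0 ≤ dem u v) (hW : 0 ≤ Winf) (p q : V₀ × Bool) :
    0 ≤ reductionWeight cap dem Winf p q := by
  unfold reductionWeight
  split_ifs
  exacts [le_rfl, hW, hdem _ _, hcap _ _]

variable [Fintype V₀]

lemma cutWeight_reduction_cutSep :
    cutWeight (reductionWeight cap dem Winf) (cutSep (firstCopy V₀)) =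
      ∑ u, ∑ v, reductionWeight cap dem Winf (u, false) (v, true) := by
  classical
  rw [cutWeight_prod_bool]
  simp [cutSep_firstCopy, cutWeight_eq]

lemma cutWeight_reduction_gained (T : Finset (V₀ × Bool)) :
    cutWeight (reductionWeight cap dem Winf)
        (fun p q => cutSep T p q ∧ ¬ cutSep (firstCopy V₀) p q) =
      cutWeight dem (fun u v => cutSep T (u, false) (v, false))
      + cutWeight dem (fun u v => cutSep T (u, true) (v, true)) := by
  rw [cutWeight_prod_bool]
  simp only [cutSep_firstCopy, ne_eq, not_true_eq_false, not_false_eq_true, Bool.false_eq_true,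
    Bool.true_eq_false, and_true, and_false, cutWeight_false, add_zero, reductionWeight_same_side]
  congr 1 <;> exact cutWeight_congr (fun _ _ => Iff.rfl) fun u v h =>
    if_neg fun huv => cutSep_ne h (by rw [huv])

lemma cutWeight_reduction_lost (T : Finset (V₀ × Bool)) :
    cutWeight (reductionWeight cap dem Winf)
        (fun p q => cutSep (firstCopy V₀) p q ∧ ¬ cutSep T p q) =
      cutWeight (fun u v => reductionWeight cap dem Winf (u, false) (v, true))
        (fun u v => ¬ cutSep T (u, false) (v, true))
      + cutWeight (fun u v => reductionWeight cap dem Winf (u, false) (v, true))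
        (fun u v => ¬ cutSep T (u, true) (v, false)) := by
  rw [cutWeight_prod_bool]
  simp only [cutSep_firstCopy, ne_eq, not_true_eq_false, not_false_eq_true, Bool.false_eq_true,
    Bool.true_eq_false, true_and, false_and, cutWeight_false, add_zero, zero_add,
    reductionWeight_true_false]

variable {cap dem Winf} {γ : ℝ}

lemma reduction_stable_of_forall_cutSep (hsparse : ∀ A : Finset V₀, A ≠ ∅ → A ≠ univ →
      γ * cutWeight dem (cutSep A) < cutWeight cap (cutSep A))
    {T : Finset (V₀ × Bool)} (hTS : T ≠ firstCopy V₀) (hTSc : T ≠ (firstCopy V₀)ᶜ)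
    (hsplit : ∀ u, cutSep T (u, false) (u, true)) :
    γ * cutWeight (reductionWeight cap dem Winf)
        (fun p q => cutSep T p q ∧ ¬ cutSep (firstCopy V₀) p q) <
      cutWeight (reductionWeight cap dem Winf)
        (fun p q => cutSep (firstCopy V₀) p q ∧ ¬ cutSep T p q) := by
  set A : Finset V₀ := univ.filter fun u => (u, false) ∈ T
  have hT : ∀ u b, (u, b) ∈ T ↔ (u ∈ A ↔ b = false) := by
    intro u b
    have := hsplit u
    cases b <;> simp only [A, cutSep, mem_filter, mem_univ, true_and] at this ⊢ <;> tauto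
  have hsame : ∀ b u v, cutSep T (u, b) (v, b) ↔ cutSep A u v := by
    intro b u v
    simp only [cutSep, hT]
    tauto
  have hcross : ∀ b c u v, b ≠ c → (¬ cutSep T (u, b) (v, c) ↔ cutSep A u v) := by
    intro b c u v hbc
    cases b <;> cases c <;> simp only [cutSep, hT] at hbc ⊢ <;> tauto
  have hcap : ∀ u v, cutSep A u v →
      reductionWeight cap dem Winf (u, false) (v, true) = cap u v := fun u v h => by
    simp [reductionWeight, cutSep_ne h]
  have hA : A ≠ ∅ := by
    rintro hA
    refine hTSc (ext fun ⟨u, b⟩ => ?_)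
    cases b <;> simp [hT, hA, firstCopy]
  have hA' : A ≠ univ := by
    rintro hA
    refine hTS (ext fun ⟨u, b⟩ => ?_)
    cases b <;> simp [hT, hA, firstCopy]
  rw [cutWeight_reduction_gained, cutWeight_reduction_lost,
    cutWeight_congr (hsame false) fun _ _ _ => rfl, cutWeight_congr (hsame true) fun _ _ _ => rfl,
    cutWeight_congr (fun u v => hcross false true u v (by decide)) hcap,
    cutWeight_congr (fun u v => hcross true false u v (by decide)) hcap]
  linarith [hsparse A hA hA']

lemma reduction_stable_of_not_cutSep (hcap : ∀ u v, 0 ≤ cap u v) (hdem : ∀ u v, 0 ≤ dem u v)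
    (hWnn : 0 ≤ Winf) (hγ : 0 ≤ γ)
    (hW : γ * ((∑ u, ∑ v, (2 * cap u v + 2 * dem u v)) / 2) < Winf)
    {T : Finset (V₀ × Bool)} {u₀ : V₀} (hu₀ : ¬ cutSep T (u₀, false) (u₀, true)) :
    γ * cutWeight (reductionWeight cap dem Winf)
        (fun p q => cutSep T p q ∧ ¬ cutSep (firstCopy V₀) p q) <
      cutWeight (reductionWeight cap dem Winf)
        (fun p q => cutSep (firstCopy V₀) p q ∧ ¬ cutSep T p q) := by
  classical
  have htotal : (∑ u, ∑ v, (2 * cap u v + 2 * dem u v)) / 2 =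
      ∑ u, ∑ v, cap u v + ∑ u, ∑ v, dem u v := by
    simp only [Finset.sum_add_distrib, ← Finset.mul_sum]
    ring
  have hcap_sum : 0 ≤ ∑ u, ∑ v, cap u v :=
    Finset.sum_nonneg fun u _ => Finset.sum_nonneg fun v _ => hcap u v
  have hdem_sum : 0 ≤ ∑ u, ∑ v, dem u v :=
    Finset.sum_nonneg fun u _ => Finset.sum_nonneg fun v _ => hdem u v
  have hw := reductionWeight_nonneg hcap hdem hWnn
  have hgained : ∀ b, cutWeight dem (fun u v => cutSep T (u, b) (v, b)) ≤
      (∑ u, ∑ v, dem u v) / 2 := fun b => by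
    refine (cutWeight_mono hdem fun _ _ _ => trivial).trans_eq ?_
    simp [cutWeight_eq]
  have hlost : Winf / 2 ≤
      cutWeight (fun u v => reductionWeight cap dem Winf (u, false) (v, true))
        (fun u v => ¬ cutSep T (u, false) (v, true)) := by
    convert half_le_cutWeight (fun u v => hw (u, false) (v, true))
      (P := fun u v => ¬ cutSep T (u, false) (v, true)) hu₀ using 2
    simp [reductionWeight]
  have hlost' : Winf / 2 ≤
      cutWeight (fun u v => reductionWeight cap dem Winf (u, false) (v, true))
        (fun u v => ¬ cutSep T (u, true) (v, false)) := by
    convert half_le_cutWeight (fun u v => hw (u, false) (v, true))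
      (P := fun u v => ¬ cutSep T (u, true) (v, false)) (by rwa [cutSep_comm]) using 2
    simp [reductionWeight]
  rw [cutWeight_reduction_gained, cutWeight_reduction_lost]
  nlinarith [hgained false, hgained true]

theorem reduction_isMaxCutStable (hcap : ∀ u v, 0 ≤ cap u v) (hdem : ∀ u v, 0 ≤ dem u v)
    (hWnn : 0 ≤ Winf) (hγ : 0 ≤ γ) (hsparse : ∀ A : Finset V₀, A ≠ ∅ → A ≠ univ →
      γ * cutWeight dem (cutSep A) < cutWeight cap (cutSep A))
    (hW : γ * ((∑ u, ∑ v, (2 * cap u v + 2 * dem u v)) / 2) < Winf) :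
    IsMaxCutStable (reductionWeight cap dem Winf) γ (firstCopy V₀) := by
  intro T hTS hTSc
  by_cases hsplit : ∀ u, cutSep T (u, false) (u, true)
  · exact reduction_stable_of_forall_cutSep hsparse hTS hTSc hsplit
  · obtain ⟨u₀, hu₀⟩ := not_forall.1 hsplit
    exact reduction_stable_of_not_cutSep hcap hdem hWnn hγ hW hu₀

end Reduction

section SignedCopies

variable {V₀ H : Type*}

def signedCopies [Neg H] (ū : V₀ → H) (p : V₀ × Bool) : H :=
  if p.2 = false then ū p.1 else -ū p.1

@[simp] lemma signedCopies_false [Neg H] (ū : V₀ → H) (u : V₀) :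
    signedCopies ū (u, false) = ū u := rfl

@[simp] lemma signedCopies_true [Neg H] (ū : V₀ → H) (u : V₀) :
    signedCopies ū (u, true) = -ū u := rfl

lemma norm_signedCopies [SeminormedAddCommGroup H] (ū : V₀ → H) (p : V₀ × Bool) :
    ‖signedCopies ū p‖ = ‖ū p.1‖ := by
  obtain ⟨u, _ | _⟩ := p <;> simp

lemma setOf_signedCopies [InvolutiveNeg H] (ū : V₀ → H) :
    {y : H | ∃ p, y = signedCopies ū p ∨ y = -signedCopies ū p} =
      {y : H | ∃ u, y = ū u ∨ y = -ū u} := by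
  ext y
  constructor
  · rintro ⟨⟨u, _ | _⟩, hy | hy⟩
    exacts [⟨u, Or.inl hy⟩, ⟨u, Or.inr hy⟩, ⟨u, Or.inr hy⟩, ⟨u, Or.inl (hy.trans (neg_neg _))⟩]
  · rintro ⟨u, hy | hy⟩
    exacts [⟨(u, false), Or.inl hy⟩, ⟨(u, true), Or.inl hy⟩]

lemma sdpValue_signedCopies [NormedAddCommGroup H] [InnerProductSpace ℝ H] [Fintype V₀]
    [DecidableEq V₀] (cap dem : V₀ → V₀ → ℝ) (Winf : ℝ) {ū : V₀ → H} (hū : ∀ u, ‖ū u‖ = 1) :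
    ((∑ p, ∑ q, reductionWeight cap dem Winf p q * ‖signedCopies ū p - signedCopies ū q‖ ^ 2)
        / 2) / 4 =
      cutWeight (reductionWeight cap dem Winf) (cutSep (firstCopy V₀)) +
        ((∑ u, ∑ v, dem u v * ‖ū u - ū v‖ ^ 2) / 2
          - (∑ u, ∑ v, cap u v * ‖ū u - ū v‖ ^ 2) / 2) / 2 := by
  have hpair : ∀ u v, reductionWeight cap dem Winf (u, false) (v, false) * ‖ū u - ū v‖ ^ 2
      + reductionWeight cap dem Winf (u, false) (v, true) * ‖ū u - -ū v‖ ^ 2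
      + reductionWeight cap dem Winf (u, true) (v, false) * ‖-ū u - ū v‖ ^ 2
      + reductionWeight cap dem Winf (u, true) (v, true) * ‖-ū u - -ū v‖ ^ 2 =
      2 * (dem u v * ‖ū u - ū v‖ ^ 2) - 2 * (cap u v * ‖ū u - ū v‖ ^ 2)
        + 8 * reductionWeight cap dem Winf (u, false) (v, true) := by
    intro u v
    have hpar := parallelogram_law_with_norm ℝ (ū u) (ū v)
    rw [hū, hū] at hpar
    have hsum : ‖ū u + ū v‖ ^ 2 = 4 - ‖ū u - ū v‖ ^ 2 := by nlinarith
    rw [sub_neg_eq_add, ← neg_add', norm_neg, neg_sub_neg, norm_sub_rev (ū v), hsum]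
    by_cases huv : u = v
    · simp [reductionWeight, huv]
      ring
    · simp [reductionWeight, huv]
      ring
  rw [cutWeight_reduction_cutSep, Fintype.sum_sum_prod_bool]
  simp only [signedCopies_false, signedCopies_true]
  rw [Finset.sum_congr rfl fun u _ => Finset.sum_congr rfl fun v _ => hpair u v]
  simp only [Finset.sum_add_distrib, Finset.sum_sub_distrib, ← Finset.mul_sum]
  ring

end SignedCopies

theorem stmt8_general {V₀ : Type*} [Fintype V₀] [DecidableEq V₀]
    {H : Type*} [NormedAddCommGroup H] [InnerProductSpace ℝ H]
    (cap dem : V₀ → V₀ → ℝ)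
    (hcapn : ∀ u v, 0 ≤ cap u v) (hdemn : ∀ u v, 0 ≤ dem u v)
    (γ : ℝ) (hγ : 1 ≤ γ)
    (ubar : V₀ → H) (hunit : ∀ u, ‖ubar u‖ = 1)
    (htri : ∀ x ∈ {y : H | ∃ u, y = ubar u ∨ y = -ubar u},
            ∀ y ∈ {y : H | ∃ u, y = ubar u ∨ y = -ubar u},
            ∀ z ∈ {y : H | ∃ u, y = ubar u ∨ y = -ubar u},
              ‖x - y‖ ^ 2 + ‖y - z‖ ^ 2 ≥ ‖x - z‖ ^ 2)
    (hsparse : ∀ A : Finset V₀, A ≠ ∅ → A ≠ Finset.univ →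
      γ * cutWeight dem (cutSep A) < cutWeight cap (cutSep A))
    (hvec : (∑ u, ∑ v, cap u v * ‖ubar u - ubar v‖ ^ 2) / 2 <
            (∑ u, ∑ v, dem u v * ‖ubar u - ubar v‖ ^ 2) / 2)
    (Winf : ℝ)
    (hW : γ * ((∑ u, ∑ v, (2 * cap u v + 2 * dem u v)) / 2) < Winf)
    (x : V₀ × Bool → H)
    (hx : ∀ p : V₀ × Bool, x p = if p.2 = false then ubar p.1 else -ubar p.1) :
    IsMaxCutStable (reductionWeight cap dem Winf) γ
        (Finset.univ.filter (fun p : V₀ × Bool => p.2 = false)) ∧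
    (∀ p, ‖x p‖ = 1) ∧
    (∀ a ∈ {y : H | ∃ p, y = x p ∨ y = -x p},
     ∀ b ∈ {y : H | ∃ p, y = x p ∨ y = -x p},
     ∀ c ∈ {y : H | ∃ p, y = x p ∨ y = -x p},
       ‖a - b‖ ^ 2 + ‖b - c‖ ^ 2 ≥ ‖a - c‖ ^ 2) ∧
    cutWeight (reductionWeight cap dem Winf)
        (cutSep (Finset.univ.filter (fun p : V₀ × Bool => p.2 = false))) <
      ((∑ p, ∑ q, reductionWeight cap dem Winf p q * ‖x p - x q‖ ^ 2) / 2) / 4 ∧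
    (∀ T : Finset (V₀ × Bool),
      cutWeight (reductionWeight cap dem Winf) (cutSep T) <
        ((∑ p, ∑ q, reductionWeight cap dem Winf p q * ‖x p - x q‖ ^ 2) / 2) / 4) := by
  obtain rfl : x = signedCopies ubar := funext hx
  have hWnn : 0 ≤ Winf := hW.le.trans' <| mul_nonneg (by linarith) <| div_nonneg
    (Finset.sum_nonneg fun u _ => Finset.sum_nonneg fun v _ => by
      linarith [hcapn u v, hdemn u v]) zero_le_two
  have hstab := reduction_isMaxCutStable hcapn hdemn hWnn (by linarith) hsparse hW
  have hcut_lt : cutWeight (reductionWeight cap dem Winf) (cutSep (firstCopy V₀)) <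
      ((∑ p, ∑ q, reductionWeight cap dem Winf p q *
        ‖signedCopies ubar p - signedCopies ubar q‖ ^ 2) / 2) / 4 := by
    rw [sdpValue_signedCopies cap dem Winf hunit]
    linarith
  have hmax := hstab.cutWeight_le (reductionWeight_nonneg hcapn hdemn hWnn) hγ
  refine ⟨hstab, fun p => (norm_signedCopies ubar p).trans (hunit p.1), ?_, hcut_lt,
    fun T => (hmax T).trans_lt hcut_lt⟩
  rw [setOf_signedCopies]
  exact htri

/-- Suppose unit vectors `{ū_u : u ∈ V₀}` are such that `{±ū_u}` satisfies
the `ℓ2²`-triangle inequalities, every nontrivial cut of `V₀` satisfies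
`cap(E_c(A,Ā)) > γ·dem(E_d(A,Ā))`, and `Σ cap·‖ū_u − ū_v‖² < Σ dem·‖ū_u − ū_v‖²`.
Then the graph `G` of the reduction (with `W∞ > γ·Σ(2cap + 2dem)`) is a `γ`-stable
instance of Max Cut with maximum cut `(S, S̄)`, `S = V₀ × {1}`, and the assignment
`x_{u₁} = ū_u`, `x_{u₂} = −ū_u` is a feasible SDP solution whose objective value strictly
exceeds `w(E(S,S̄))`; consequently the SDP relaxation for `G` is not integral (every
integral solution has value strictly below the objective value of `x`). -/
theorem stmt8 {V₀ : Type*} [Fintype V₀] [DecidableEq V₀]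
    {H : Type*} [NormedAddCommGroup H] [InnerProductSpace ℝ H]
    (hcard : 2 ≤ Fintype.card V₀)
    (cap dem : V₀ → V₀ → ℝ)
    (hcaps : ∀ u v, cap u v = cap v u) (hdems : ∀ u v, dem u v = dem v u)
    (hcapn : ∀ u v, 0 ≤ cap u v) (hdemn : ∀ u v, 0 ≤ dem u v)
    (hcap0 : ∀ u, cap u u = 0) (hdem0 : ∀ u, dem u u = 0)
    (γ : ℝ) (hγ : 1 ≤ γ)
    (ubar : V₀ → H) (hunit : ∀ u, ‖ubar u‖ = 1)
    (htri : ∀ x ∈ {y : H | ∃ u, y = ubar u ∨ y = -ubar u},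
            ∀ y ∈ {y : H | ∃ u, y = ubar u ∨ y = -ubar u},
            ∀ z ∈ {y : H | ∃ u, y = ubar u ∨ y = -ubar u},
              ‖x - y‖ ^ 2 + ‖y - z‖ ^ 2 ≥ ‖x - z‖ ^ 2)
    (hsparse : ∀ A : Finset V₀, A ≠ ∅ → A ≠ Finset.univ →
      γ * cutWeight dem (cutSep A) < cutWeight cap (cutSep A))
    (hvec : (∑ u, ∑ v, cap u v * ‖ubar u - ubar v‖ ^ 2) / 2 <
            (∑ u, ∑ v, dem u v * ‖ubar u - ubar v‖ ^ 2) / 2)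
    (Winf : ℝ)
    (hW : γ * ((∑ u, ∑ v, (2 * cap u v + 2 * dem u v)) / 2) < Winf)
    (x : V₀ × Bool → H)
    (hx : ∀ p : V₀ × Bool, x p = if p.2 = false then ubar p.1 else -ubar p.1) :
    IsMaxCutStable (reductionWeight cap dem Winf) γ
        (Finset.univ.filter (fun p : V₀ × Bool => p.2 = false)) ∧
    (∀ p, ‖x p‖ = 1) ∧
    (∀ a ∈ {y : H | ∃ p, y = x p ∨ y = -x p},
     ∀ b ∈ {y : H | ∃ p, y = x p ∨ y = -x p},
     ∀ c ∈ {y : H | ∃ p, y = x p ∨ y = -x p},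
       ‖a - b‖ ^ 2 + ‖b - c‖ ^ 2 ≥ ‖a - c‖ ^ 2) ∧
    cutWeight (reductionWeight cap dem Winf)
        (cutSep (Finset.univ.filter (fun p : V₀ × Bool => p.2 = false))) <
      ((∑ p, ∑ q, reductionWeight cap dem Winf p q * ‖x p - x q‖ ^ 2) / 2) / 4 ∧
    (∀ T : Finset (V₀ × Bool),
      cutWeight (reductionWeight cap dem Winf) (cutSep T) <
        ((∑ p, ∑ q, reductionWeight cap dem Winf p q * ‖x p - x q‖ ^ 2) / 2) / 4) :=
  stmt8_general cap dem hcapn hdemn γ hγ ubar hunit htri hsparse hvec Winf hW x hx
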